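/- Let n ≥ 1. Let K : ℝⁿ → Matrix (Fin n) (Fin n) ℝ be a C¹ map with K(x) symmetric for every x, and let V, U, W_V, W_U : ℝⁿ → ℝ be C¹ with U nowhere zero. Define on ℝⁿ × ℝⁿ the functions G(x,p) = ∑_i p_i², A(x,p) = ∑_{i,j} K_{ij}(x) p_i p_j, and suppose that {G + V, A + W_V} = 0 and {G + U, A + W_U} = 0 identically (V, U, W_V, W_U regarded as functions of x only). Then the Stäckel transform H̃ := (G + V)/U admits the second-order integral F̃ := A + W_V + (1 − W_U)·H̃, i.e. {H̃, F̃} = 0 identically on ℝⁿ × ℝⁿ. -/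

import Mathlib

open scoped BigOperators

/-- Partial derivative of a function on ℝⁿ in the `i`-th coordinate direction. -/
noncomputable def pd {n : ℕ} (i : Fin n) (f : (Fin n → ℝ) → ℝ) (x : Fin n → ℝ) : ℝ :=
  fderiv ℝ f x (Pi.single i 1)

/-- Partial derivative in the `x^i` direction of a function on phase space ℝⁿ × ℝⁿ. -/
noncomputable def pdx {n : ℕ} (i : Fin n)
    (F : (Fin n → ℝ) × (Fin n → ℝ) → ℝ) (z : (Fin n → ℝ) × (Fin n → ℝ)) : ℝ :=
  fderiv ℝ F z (Pi.single i 1, 0)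

/-- Partial derivative in the `p_i` direction of a function on phase space ℝⁿ × ℝⁿ. -/
noncomputable def pdp {n : ℕ} (i : Fin n)
    (F : (Fin n → ℝ) × (Fin n → ℝ) → ℝ) (z : (Fin n → ℝ) × (Fin n → ℝ)) : ℝ :=
  fderiv ℝ F z (0, Pi.single i 1)

/-- Canonical Poisson bracket on ℝⁿ × ℝⁿ. -/
noncomputable def poisson {n : ℕ}
    (F G : (Fin n → ℝ) × (Fin n → ℝ) → ℝ) (z : (Fin n → ℝ) × (Fin n → ℝ)) : ℝ :=
  ∑ i : Fin n, (pdx i F z * pdp i G z - pdp i F z * pdx i G z)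

/-! The Poisson bracket is a biderivation, so the Leibniz rule expands
`{H_V/U, F_V + (1 - W_U) H_V/U}` into brackets of `H_V, U, F_V, W_U`; using `{H_V, F_V} = 0`
and that functions of position commute, what is left is `-(H_V/U²) ({U, A} + {G, W_U})`.
Now `{G + U, A + W_U}` splits into `{G, A}`, cubic in the momenta, and `{U, A} + {G, W_U}`,
linear in them. As it vanishes identically, comparing its values at `p` and `2p` shows that
both parts vanish. -/

theorem fderiv_fun_div_apply {𝕜 E : Type*} [NontriviallyNormedField 𝕜] [NormedAddCommGroup E]
    [NormedSpace 𝕜 E] {f g : E → 𝕜} {x : E} (hf : DifferentiableAt 𝕜 f x)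
    (hg : DifferentiableAt 𝕜 g x) (hx : g x ≠ 0) (v : E) :
    fderiv 𝕜 (fun y => f y / g y) x v
      = (fderiv 𝕜 f x v * g x - f x * fderiv 𝕜 g x v) / g x ^ 2 := by
  have hinv : HasFDerivAt (fun y => (g y)⁻¹)
      ((ContinuousLinearMap.toSpanSingleton 𝕜 (-(g x ^ 2)⁻¹)).comp (fderiv 𝕜 g x)) x :=
    (hasFDerivAt_inv hx).comp x hg.hasFDerivAt
  simp only [div_eq_mul_inv]
  rw [(hf.hasFDerivAt.fun_mul hinv).fderiv]
  simp only [add_apply, smul_apply, ContinuousLinearMap.comp_apply, ContinuousLinearMap.toSpanSingleton_apply, smul_eq_mul]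
  field_simp
  ring

theorem fderiv_comp_fst_apply {𝕜 E F G : Type*} [NontriviallyNormedField 𝕜]
    [NormedAddCommGroup E] [NormedSpace 𝕜 E] [NormedAddCommGroup F] [NormedSpace 𝕜 F]
    [NormedAddCommGroup G] [NormedSpace 𝕜 G] {f : E → G} {p : E × F}
    (hf : DifferentiableAt 𝕜 f p.1) (v : E × F) :
    fderiv 𝕜 (fun q : E × F => f q.1) p v = fderiv 𝕜 f p.1 v.1 := by
  have h : HasFDerivAt (fun q : E × F => f q.1)
      ((fderiv 𝕜 f p.1).comp (ContinuousLinearMap.fst 𝕜 E F)) p :=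
    hf.hasFDerivAt.comp p hasFDerivAt_fst
  rw [h.fderiv]
  rfl

abbrev PhaseSpace (n : ℕ) := (Fin n → ℝ) × (Fin n → ℝ)

section

variable {n : ℕ} {F G H U W A : PhaseSpace n → ℝ} {z : PhaseSpace n}

theorem poisson_comm : poisson F G z = -poisson G F z := by
  simp only [poisson, ← Finset.sum_neg_distrib]
  exact Finset.sum_congr rfl fun i _ => by ring

theorem poisson_self : poisson F F z = 0 := by
  linarith [poisson_comm (F := F) (G := F) (z := z)]

theorem poisson_add_right (hG : DifferentiableAt ℝ G z) (hH : DifferentiableAt ℝ H z) :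
    poisson F (fun w => G w + H w) z = poisson F G z + poisson F H z := by
  simp only [poisson, pdx, pdp, fderiv_fun_add hG hH, add_apply, ← Finset.sum_add_distrib]
  exact Finset.sum_congr rfl fun i _ => by ring

theorem poisson_add_left (hF : DifferentiableAt ℝ F z) (hG : DifferentiableAt ℝ G z) :
    poisson (fun w => F w + G w) H z = poisson F H z + poisson G H z := by
  rw [poisson_comm, poisson_add_right hF hG, poisson_comm (F := F), poisson_comm (F := G)]
  ring

theorem poisson_sub_right (hG : DifferentiableAt ℝ G z) (hH : DifferentiableAt ℝ H z) :
    poisson F (fun w => G w - H w) z = poisson F G z - poisson F H z := by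
  simp only [poisson, pdx, pdp, fderiv_fun_sub hG hH, sub_apply, ← Finset.sum_sub_distrib]
  exact Finset.sum_congr rfl fun i _ => by ring

theorem poisson_const_right (c : ℝ) : poisson F (fun _ => c) z = 0 := by
  simp [poisson, pdx, pdp]

theorem poisson_mul_right (hG : DifferentiableAt ℝ G z) (hH : DifferentiableAt ℝ H z) :
    poisson F (fun w => G w * H w) z = G z * poisson F H z + H z * poisson F G z := by
  simp only [poisson, pdx, pdp, fderiv_fun_mul hG hH, add_apply,
    smul_apply, smul_eq_mul, Finset.mul_sum, ← Finset.sum_add_distrib]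
  exact Finset.sum_congr rfl fun i _ => by ring

theorem poisson_div_left (hF : DifferentiableAt ℝ F z) (hH : DifferentiableAt ℝ H z)
    (hz : H z ≠ 0) :
    poisson (fun w => F w / H w) G z = (H z * poisson F G z - F z * poisson H G z) / H z ^ 2 := by
  simp only [poisson, pdx, pdp, fderiv_fun_div_apply hF hH hz, Finset.mul_sum,
    ← Finset.sum_sub_distrib, Finset.sum_div]
  exact Finset.sum_congr rfl fun i _ => by ring

theorem poisson_comp_fst_comp_fst {f g : (Fin n → ℝ) → ℝ} (hf : DifferentiableAt ℝ f z.1)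
    (hg : DifferentiableAt ℝ g z.1) : poisson (fun w => f w.1) (fun w => g w.1) z = 0 := by
  simp [poisson, pdp, fderiv_comp_fst_apply hf, fderiv_comp_fst_apply hg]

theorem poisson_div_add_mul_div (hH : DifferentiableAt ℝ H z) (hF : DifferentiableAt ℝ F z)
    (hU : DifferentiableAt ℝ U z) (hW : DifferentiableAt ℝ W z) (hU0 : U z ≠ 0) :
    poisson (fun w => H w / U w) (fun w => F w + (1 - W w) * (H w / U w)) z
      = (U z * poisson H F z - H z * (poisson U F z + poisson H W z)
          + H z ^ 2 / U z * poisson U W z) / U z ^ 2 := by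
  have hHU : DifferentiableAt ℝ (fun w => H w / U w) z := hH.mul (hU.inv hU0)
  have hW' : DifferentiableAt ℝ (fun w => 1 - W w) z := (differentiableAt_const 1).sub hW
  rw [poisson_add_right hF (hW'.fun_mul hHU), poisson_mul_right hW' hHU, poisson_self,
    poisson_sub_right (differentiableAt_const 1) hW, poisson_const_right,
    poisson_div_left hH hU hU0, poisson_div_left hH hU hU0]
  field_simp
  ring

def IsFiberHomogeneous (k : ℕ) (F : PhaseSpace n → ℝ) : Prop :=
  ∀ (t : ℝ) (z : PhaseSpace n), F (z.1, t • z.2) = t ^ k * F z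

variable {k l : ℕ}

theorem fderiv_fiber_smul (hF : Differentiable ℝ F) (hk : IsFiberHomogeneous k F) (t : ℝ)
    (z v : PhaseSpace n) :
    fderiv ℝ F (z.1, t • z.2) (v.1, t • v.2) = t ^ k * fderiv ℝ F z v := by
  let S : PhaseSpace n →L[ℝ] PhaseSpace n :=
    (ContinuousLinearMap.id ℝ _).prodMap (t • ContinuousLinearMap.id ℝ _)
  have hcomp : HasFDerivAt (fun w => F (S w)) ((fderiv ℝ F (S z)).comp S) z :=
    (hF (S z)).hasFDerivAt.comp z S.hasFDerivAt
  have hscale : HasFDerivAt (fun w => F (S w)) (t ^ k • fderiv ℝ F z) z := by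
    rw [show (fun w => F (S w)) = fun w => t ^ k * F w from funext (hk t)]
    exact (hF z).hasFDerivAt.const_mul _
  exact congrArg (· v) (hcomp.unique hscale)

theorem pdx_fiber_smul (hF : Differentiable ℝ F) (hk : IsFiberHomogeneous k F) (t : ℝ)
    (i : Fin n) (z : PhaseSpace n) : pdx i F (z.1, t • z.2) = t ^ k * pdx i F z := by
  simpa [pdx] using fderiv_fiber_smul hF hk t z (Pi.single i 1, 0)

theorem pdp_fiber_smul (hF : Differentiable ℝ F) (hk : IsFiberHomogeneous k F) (t : ℝ)
    (i : Fin n) (z : PhaseSpace n) : t * pdp i F (z.1, t • z.2) = t ^ k * pdp i F z := by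
  have h := fderiv_fiber_smul hF hk t z (0, Pi.single i 1)
  rwa [show ((0 : Fin n → ℝ), t • Pi.single i (1 : ℝ)) = t • (0, Pi.single i 1) by simp,
    map_smul, smul_eq_mul] at h

theorem poisson_fiber_smul (hF : Differentiable ℝ F) (hG : Differentiable ℝ G)
    (hk : IsFiberHomogeneous k F) (hl : IsFiberHomogeneous l G) (t : ℝ) (z : PhaseSpace n) :
    t * poisson F G (z.1, t • z.2) = t ^ (k + l) * poisson F G z := by
  simp only [poisson, Finset.mul_sum]
  refine Finset.sum_congr rfl fun i _ => ?_
  have hFp := pdp_fiber_smul hF hk t i z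
  have hGp := pdp_fiber_smul hG hl t i z
  rw [pdx_fiber_smul hF hk, pdx_fiber_smul hG hl, pow_add]
  linear_combination t ^ k * pdx i F z * hGp - t ^ l * pdx i G z * hFp

theorem isFiberHomogeneous_comp_fst (f : (Fin n → ℝ) → ℝ) :
    IsFiberHomogeneous 0 (fun z : PhaseSpace n => f z.1) := by
  simp [IsFiberHomogeneous]

theorem isFiberHomogeneous_sum_sq :
    IsFiberHomogeneous 2 (fun z : PhaseSpace n => ∑ i, z.2 i ^ 2) := by
  intro t z
  simp only [Pi.smul_apply, smul_eq_mul, mul_pow, Finset.mul_sum]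

theorem isFiberHomogeneous_quadraticForm (M : (Fin n → ℝ) → Matrix (Fin n) (Fin n) ℝ) :
    IsFiberHomogeneous 2 (fun z : PhaseSpace n => ∑ i, ∑ j, M z.1 i j * z.2 i * z.2 j) := by
  intro t z
  simp only [Pi.smul_apply, smul_eq_mul, Finset.mul_sum]
  exact Finset.sum_congr rfl fun i _ => Finset.sum_congr rfl fun j _ => by ring

theorem poisson_add_comp_fst {u v : (Fin n → ℝ) → ℝ} (hF : DifferentiableAt ℝ F z)
    (hG : DifferentiableAt ℝ G z) (hu : DifferentiableAt ℝ u z.1) (hv : DifferentiableAt ℝ v z.1) :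
    poisson (fun w => F w + u w.1) (fun w => G w + v w.1) z
      = poisson F G z + (poisson F (fun w => v w.1) z + poisson (fun w => u w.1) G z) := by
  have hu' : DifferentiableAt ℝ (fun w : PhaseSpace n => u w.1) z := hu.comp z differentiableAt_fst
  have hv' : DifferentiableAt ℝ (fun w : PhaseSpace n => v w.1) z := hv.comp z differentiableAt_fst
  rw [poisson_add_left hF hu', poisson_add_right hG hv', poisson_add_right hG hv',
    poisson_comp_fst_comp_fst hu hv]
  ring

theorem poisson_eq_zero_of_poisson_add_comp_fst {u v : (Fin n → ℝ) → ℝ}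
    (hF : Differentiable ℝ F) (hG : Differentiable ℝ G)
    (hF2 : IsFiberHomogeneous 2 F) (hG2 : IsFiberHomogeneous 2 G)
    (hu : Differentiable ℝ u) (hv : Differentiable ℝ v)
    (h : ∀ z, poisson (fun w => F w + u w.1) (fun w => G w + v w.1) z = 0) (z : PhaseSpace n) :
    poisson F G z = 0 := by
  have hu0 := isFiberHomogeneous_comp_fst u
  have hv0 := isFiberHomogeneous_comp_fst v
  have hu' : Differentiable ℝ (fun w : PhaseSpace n => u w.1) := hu.comp differentiable_fst
  have hv' : Differentiable ℝ (fun w : PhaseSpace n => v w.1) := hv.comp differentiable_fst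
  have h1 := h z
  have h2 := h (z.1, (2 : ℝ) • z.2)
  rw [poisson_add_comp_fst (hF z) (hG z) (hu z.1) (hv z.1)] at h1
  rw [poisson_add_comp_fst (hF _) (hG _) (hu _) (hv _)] at h2
  have e1 := poisson_fiber_smul hF hG hF2 hG2 2 z
  have e2 := poisson_fiber_smul hF hv' hF2 hv0 2 z
  have e3 := poisson_fiber_smul hu' hG hu0 hG2 2 z
  norm_num at e1 e2 e3
  linarith

theorem poisson_stackel_eq_zero {V U WV WU : (Fin n → ℝ) → ℝ}
    (hG : Differentiable ℝ G) (hA : Differentiable ℝ A)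
    (hG2 : IsFiberHomogeneous 2 G) (hA2 : IsFiberHomogeneous 2 A)
    (hV : Differentiable ℝ V) (hU : Differentiable ℝ U)
    (hWV : Differentiable ℝ WV) (hWU : Differentiable ℝ WU) (hU0 : ∀ x, U x ≠ 0)
    (hintV : ∀ z, poisson (fun w => G w + V w.1) (fun w => A w + WV w.1) z = 0)
    (hintU : ∀ z, poisson (fun w => G w + U w.1) (fun w => A w + WU w.1) z = 0)
    (z : PhaseSpace n) :
    poisson (fun w => (G w + V w.1) / U w.1)
      (fun w => A w + WV w.1 + (1 - WU w.1) * ((G w + V w.1) / U w.1)) z = 0 := by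
  have dfst {f : (Fin n → ℝ) → ℝ} (hf : Differentiable ℝ f) :
      DifferentiableAt ℝ (fun w : PhaseSpace n => f w.1) z :=
    (hf z.1).comp z differentiableAt_fst
  have hcross : poisson (fun w => U w.1) (fun w => A w + WV w.1) z
      + poisson (fun w => G w + V w.1) (fun w => WU w.1) z = 0 := by
    have hsplit := hintU z
    rw [poisson_add_comp_fst (hG z) (hA z) (hU z.1) (hWU z.1),
      poisson_eq_zero_of_poisson_add_comp_fst hG hA hG2 hA2 hU hWU hintU z] at hsplit
    rw [poisson_add_right (hA z) (dfst hWV), poisson_add_left (hG z) (dfst hV),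
      poisson_comp_fst_comp_fst (hU z.1) (hWV z.1),
      poisson_comp_fst_comp_fst (hV z.1) (hWU z.1)]
    linarith
  rw [poisson_div_add_mul_div ((hG z).fun_add (dfst hV)) ((hA z).fun_add (dfst hWV))
      (dfst hU) (dfst hWU) (hU0 z.1),
    hintV z, hcross, poisson_comp_fst_comp_fst (hU z.1) (hWU z.1)]
  simp

end

theorem stmt9_general (n : ℕ)
    (K : (Fin n → ℝ) → Matrix (Fin n) (Fin n) ℝ)
    (hK : ∀ i j, ContDiff ℝ 1 (fun x => K x i j))
    (V U WV WU : (Fin n → ℝ) → ℝ)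
    (hV : ContDiff ℝ 1 V) (hU : ContDiff ℝ 1 U)
    (hWV : ContDiff ℝ 1 WV) (hWU : ContDiff ℝ 1 WU)
    (hU0 : ∀ x, U x ≠ 0)
    (G A : (Fin n → ℝ) × (Fin n → ℝ) → ℝ)
    (hG : ∀ z, G z = ∑ i : Fin n, (z.2 i) ^ 2)
    (hA : ∀ z, A z = ∑ i : Fin n, ∑ j : Fin n, K z.1 i j * z.2 i * z.2 j)
    (hintV : ∀ z, poisson (fun w => G w + V w.1) (fun w => A w + WV w.1) z = 0)
    (hintU : ∀ z, poisson (fun w => G w + U w.1) (fun w => A w + WU w.1) z = 0)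
    (Htilde Ftilde : (Fin n → ℝ) × (Fin n → ℝ) → ℝ)
    (hHt : ∀ z, Htilde z = (G z + V z.1) / U z.1)
    (hFt : ∀ z, Ftilde z = A z + WV z.1 + (1 - WU z.1) * Htilde z) :
    ∀ z : (Fin n → ℝ) × (Fin n → ℝ), poisson Htilde Ftilde z = 0 := by
  have hGd : Differentiable ℝ G := by rw [funext hG]; fun_prop
  have hAd : Differentiable ℝ A := by
    have := fun i j => (hK i j).differentiable one_ne_zero
    rw [funext hA]; fun_prop
  have hG2 : IsFiberHomogeneous 2 G := by rw [funext hG]; exact isFiberHomogeneous_sum_sq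
  have hA2 : IsFiberHomogeneous 2 A := by
    rw [funext hA]; exact isFiberHomogeneous_quadraticForm K
  intro z
  rw [show Htilde = fun w => (G w + V w.1) / U w.1 from funext hHt,
    show Ftilde = fun w => A w + WV w.1 + (1 - WU w.1) * ((G w + V w.1) / U w.1) from
      funext fun w => by rw [hFt, hHt]]
  exact poisson_stackel_eq_zero hGd hAd hG2 hA2 (hV.differentiable one_ne_zero)
    (hU.differentiable one_ne_zero) (hWV.differentiable one_ne_zero)
    (hWU.differentiable one_ne_zero) hU0 hintV hintU z

theorem stmt9 (n : ℕ) (hn : 1 ≤ n)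
    (K : (Fin n → ℝ) → Matrix (Fin n) (Fin n) ℝ)
    (hK : ∀ i j, ContDiff ℝ 1 (fun x => K x i j))
    (hKsymm : ∀ x, (K x).IsSymm)
    (V U WV WU : (Fin n → ℝ) → ℝ)
    (hV : ContDiff ℝ 1 V) (hU : ContDiff ℝ 1 U)
    (hWV : ContDiff ℝ 1 WV) (hWU : ContDiff ℝ 1 WU)
    (hU0 : ∀ x, U x ≠ 0)
    (G A : (Fin n → ℝ) × (Fin n → ℝ) → ℝ)
    (hG : ∀ z, G z = ∑ i : Fin n, (z.2 i) ^ 2)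
    (hA : ∀ z, A z = ∑ i : Fin n, ∑ j : Fin n, K z.1 i j * z.2 i * z.2 j)
    (hintV : ∀ z, poisson (fun w => G w + V w.1) (fun w => A w + WV w.1) z = 0)
    (hintU : ∀ z, poisson (fun w => G w + U w.1) (fun w => A w + WU w.1) z = 0)
    (Htilde Ftilde : (Fin n → ℝ) × (Fin n → ℝ) → ℝ)
    (hHt : ∀ z, Htilde z = (G z + V z.1) / U z.1)
    (hFt : ∀ z, Ftilde z = A z + WV z.1 + (1 - WU z.1) * Htilde z) :
    ∀ z : (Fin n → ℝ) × (Fin n → ℝ), poisson Htilde Ftilde z = 0 :=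
  stmt9_general n K hK V U WV WU hV hU hWV hWU hU0 G A hG hA hintV hintU Htilde Ftilde hHt hFt
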